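/- arXiv:1808.05213 — 2 statements merged into one kernel-verified Lean document; each statement's English description precedes it below -/
import Mathlib

section
/- For any Latin square L of order n, the 3-domatic number of L_3(L,n) is at most n; moreover d_3(L_3(L,n)) = n if and only if L can be decomposed into n pairwise disjoint transversals. -/
def IsLatin (n : ℕ) (L : Fin n → Fin n → Fin n) : Prop :=
  (∀ i, Function.Bijective (L i)) ∧ (∀ j, Function.Bijective fun i => L i j)

def latinGraph (n : ℕ) (L : Fin n → Fin n → Fin n) : SimpleGraph (Fin n × Fin n) :=
  SimpleGraph.fromRel fun a b => a.1 = b.1 ∨ a.2 = b.2 ∨ L a.1 a.2 = L b.1 b.2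

def IsKDominating {V : Type*} (G : SimpleGraph V) (k : ℕ) (S : Set V) : Prop :=
  ∀ v ∉ S, k ≤ (S ∩ G.neighborSet v).ncard

def IsTransversal (n : ℕ) (L : Fin n → Fin n → Fin n) (S : Set (Fin n × Fin n)) : Prop :=
  (∀ i : Fin n, ∃! c, c ∈ S ∧ c.1 = i) ∧
  (∀ j : Fin n, ∃! c, c ∈ S ∧ c.2 = j) ∧
  (∀ s : Fin n, ∃! c, c ∈ S ∧ L c.1 c.2 = s)

def IsQuasiTransversal (n : ℕ) (L : Fin n → Fin n → Fin n) (S : Set (Fin n × Fin n)) : Prop :=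
  (∃ i0, ({c ∈ S | c.1 = i0}).ncard = 2 ∧ ∀ i, i ≠ i0 → ({c ∈ S | c.1 = i}).ncard = 1) ∧
  (∃ j0, ({c ∈ S | c.2 = j0}).ncard = 2 ∧ ∀ j, j ≠ j0 → ({c ∈ S | c.2 = j}).ncard = 1) ∧
  (∃ s0, ({c ∈ S | L c.1 c.2 = s0}).ncard = 2 ∧ ∀ s, s ≠ s0 → ({c ∈ S | L c.1 c.2 = s}).ncard = 1)

def IsPartialTransversal (n : ℕ) (L : Fin n → Fin n → Fin n) (S : Set (Fin n × Fin n)) : Prop :=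
  ∀ a ∈ S, ∀ b ∈ S, a ≠ b → a.1 ≠ b.1 ∧ a.2 ≠ b.2 ∧ L a.1 a.2 ≠ L b.1 b.2

def IsKPlex (n : ℕ) (L : Fin n → Fin n → Fin n) (k : ℕ) (S : Set (Fin n × Fin n)) : Prop :=
  (∀ i, ({c ∈ S | c.1 = i}).ncard = k) ∧ (∀ j, ({c ∈ S | c.2 = j}).ncard = k) ∧
  (∀ s, ({c ∈ S | L c.1 c.2 = s}).ncard = k)

noncomputable def gamma3 (n : ℕ) (L : Fin n → Fin n → Fin n) : ℕ :=
  sInf {m | ∃ S : Set (Fin n × Fin n), IsKDominating (latinGraph n L) 3 S ∧ S.ncard = m}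

noncomputable def domatic3 (n : ℕ) (L : Fin n → Fin n → Fin n) : ℕ :=
  sSup {t | ∃ P : Fin t → Set (Fin n × Fin n),
    (Pairwise fun a b => Disjoint (P a) (P b)) ∧ (⋃ i, P i) = Set.univ ∧
    ∀ i, IsKDominating (latinGraph n L) 3 (P i)}

/-!
The Latin square graph is `3(n-1)`-regular on `n²` cells. Double counting the edges between a
3-dominating set `S` and its complement gives `3(n² - |S|) ≤ 3(n-1)|S|`, i.e. `|S| ≥ n`, and
equality forces `S` to be independent. An independent set of `n` cells meets every row, column and
symbol exactly once, so it is a transversal. Hence a partition of the cells into 3-dominating sets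
has at most `n` parts, and exactly `n` parts only if every part is a transversal; conversely every
transversal is 3-dominating.
-/

open Finset

theorem Finset.existsUnique_of_injOn_of_card_le {α β : Type*} [Fintype β] {s : Finset α}
    {f : α → β} (hf : Set.InjOn f s) (hcard : Fintype.card β ≤ #s) (y : β) :
    ∃! a, a ∈ s ∧ f a = y := by
  obtain ⟨a, ha, rfl⟩ := surjOn_of_injOn_of_card_le f (t := univ)
    (fun _ _ => mem_coe.2 (mem_univ _)) hf (by simpa) (mem_univ y)
  exact ⟨a, ⟨ha, rfl⟩, fun b ⟨hb, hab⟩ => hf hb ha hab⟩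

theorem Finset.card_filter_eq_of_existsUnique {α β : Type*} [Fintype α] [Fintype β]
    {p : α → Prop} [DecidablePred p] {g : α → β} (h : ∀ y, ∃! a, p a ∧ g a = y) :
    #{a | p a} = Fintype.card β := by
  rw [← Fintype.card_subtype]
  refine Fintype.card_congr (Equiv.ofBijective (fun a => g a) ⟨fun a b hab => ?_, fun y => ?_⟩)
  · exact Subtype.ext ((h _).unique ⟨a.2, hab⟩ ⟨b.2, rfl⟩)
  · obtain ⟨a, ⟨ha, hy⟩, -⟩ := h y
    exact ⟨⟨a, ha⟩, hy⟩

theorem Set.sum_ncard_eq_of_iUnion_eq_univ {α ι : Type*} [Fintype ι] [Finite α] {P : ι → Set α}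
    (hdisj : Pairwise fun a b => Disjoint (P a) (P b)) (hcover : ⋃ i, P i = univ) :
    ∑ i, (P i).ncard = Nat.card α := by
  rw [← Set.ncard_univ, ← hcover, Set.ncard_iUnion_of_finite (fun _ => toFinite _) hdisj,
    finsum_eq_sum_of_fintype]

section Domination

variable {V : Type*} [Fintype V] [DecidableEq V] {G : SimpleGraph V} [DecidableRel G.Adj]
  {k d : ℕ} {s : Finset V}

theorem IsKDominating.card_compl_mul_le_sum (hs : IsKDominating G k s) :
    #sᶜ * k ≤ ∑ c ∈ s, #{w ∈ sᶜ | G.Adj w c} :=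
  calc #sᶜ * k ≤ ∑ w ∈ sᶜ, #{c ∈ s | G.Adj w c} := by
        rw [← smul_eq_mul]
        refine card_nsmul_le_sum _ _ _ fun w hw => ?_
        refine (hs w (by simpa using hw)).trans_eq ?_
        rw [← Set.ncard_coe_finset, coe_filter]
        rfl
    _ = _ := sum_card_bipartiteAbove_eq_sum_card_bipartiteBelow _

theorem SimpleGraph.card_filter_adj_compl_le_degree (c : V) :
    #{w ∈ sᶜ | G.Adj w c} ≤ G.degree c := by
  rw [← card_neighborFinset_eq_degree]
  exact card_le_card fun w hw => by simpa [G.adj_comm] using (mem_filter.1 hw).2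

theorem SimpleGraph.card_filter_adj_compl_lt_degree {b c : V} (hb : b ∈ s) (hbc : G.Adj b c) :
    #{w ∈ sᶜ | G.Adj w c} < G.degree c := by
  rw [← card_neighborFinset_eq_degree]
  refine card_lt_card ((ssubset_iff_of_subset fun w hw => ?_).2 ⟨b, ?_, ?_⟩)
  · simpa [G.adj_comm] using (mem_filter.1 hw).2
  · simpa [G.adj_comm] using hbc
  · simp [hb]

theorem IsKDominating.card_compl_mul_le (hG : G.IsRegularOfDegree d)
    (hs : IsKDominating G k s) : #sᶜ * k ≤ #s * d :=
  calc #sᶜ * k ≤ ∑ c ∈ s, #{w ∈ sᶜ | G.Adj w c} := hs.card_compl_mul_le_sum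
    _ ≤ ∑ _c ∈ s, d := sum_le_sum fun c _ => hG.degree_eq c ▸ G.card_filter_adj_compl_le_degree c
    _ = #s * d := by rw [sum_const, smul_eq_mul]

theorem IsKDominating.isIndepSet_of_card_mul_le (hG : G.IsRegularOfDegree d)
    (hs : IsKDominating G k s) (hcard : #s * d ≤ #sᶜ * k) : G.IsIndepSet s := by
  intro a ha b hb _ hab
  have : ∑ c ∈ s, #{w ∈ sᶜ | G.Adj w c} < ∑ _c ∈ s, d :=
    sum_lt_sum (fun c _ => hG.degree_eq c ▸ G.card_filter_adj_compl_le_degree c)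
      ⟨b, hb, hG.degree_eq b ▸ G.card_filter_adj_compl_lt_degree ha hab⟩
  rw [sum_const, smul_eq_mul] at this
  exact (hcard.trans hs.card_compl_mul_le_sum).not_gt this

end Domination

section LatinSquare

variable {n : ℕ} {L : Fin n → Fin n → Fin n}

theorem latinGraph_adj {a b : Fin n × Fin n} :
    (latinGraph n L).Adj a b ↔ a ≠ b ∧ (a.1 = b.1 ∨ a.2 = b.2 ∨ L a.1 a.2 = L b.1 b.2) := by
  simp only [latinGraph, SimpleGraph.fromRel_adj, eq_comm (a := b.1), eq_comm (a := b.2),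
    eq_comm (a := L b.1 b.2), or_self]

instance : DecidableRel (latinGraph n L).Adj := fun _ _ => decidable_of_iff' _ latinGraph_adj

theorem IsLatin.eq_of_fst_eq_of_symbol_eq (hL : IsLatin n L) {a b : Fin n × Fin n}
    (h : a.1 = b.1) (hs : L a.1 a.2 = L b.1 b.2) : a = b := by
  rw [← h] at hs
  exact Prod.ext h ((hL.1 a.1).1 hs)

theorem IsLatin.eq_of_snd_eq_of_symbol_eq (hL : IsLatin n L) {a b : Fin n × Fin n}
    (h : a.2 = b.2) (hs : L a.1 a.2 = L b.1 b.2) : a = b := by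
  rw [← h] at hs
  exact Prod.ext ((hL.2 a.2).1 hs) h

theorem IsLatin.card_filter_symbol_eq (hL : IsLatin n L) (x : Fin n) :
    #{w : Fin n × Fin n | L w.1 w.2 = x} = n := by
  refine (card_filter_eq_of_existsUnique (g := Prod.fst) fun i => ?_).trans (Fintype.card_fin n)
  obtain ⟨j, hj, hj_unique⟩ := (hL.1 i).existsUnique x
  exact ⟨(i, j), ⟨hj, rfl⟩, fun w ⟨hw, hwi⟩ => Prod.ext hwi (hj_unique _ (hwi ▸ hw))⟩

theorem card_filter_fst_eq (i : Fin n) : #{w : Fin n × Fin n | w.1 = i} = n :=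
  (card_filter_eq_of_existsUnique (g := Prod.snd) fun j =>
    ⟨(i, j), ⟨rfl, rfl⟩, fun _ ⟨h1, h2⟩ => Prod.ext h1 h2⟩).trans (Fintype.card_fin n)

theorem card_filter_snd_eq (j : Fin n) : #{w : Fin n × Fin n | w.2 = j} = n :=
  (card_filter_eq_of_existsUnique (g := Prod.fst) fun i =>
    ⟨(i, j), ⟨rfl, rfl⟩, fun _ ⟨h2, h1⟩ => Prod.ext h1 h2⟩).trans (Fintype.card_fin n)

theorem latinGraph_neighborFinset (v : Fin n × Fin n) :
    (latinGraph n L).neighborFinset v =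
      ({w | w.1 = v.1} : Finset _).erase v ∪ ({w | w.2 = v.2} : Finset _).erase v ∪
        ({w | L w.1 w.2 = L v.1 v.2} : Finset _).erase v := by
  ext w
  simp only [SimpleGraph.mem_neighborFinset, latinGraph_adj, mem_union, mem_erase, mem_filter,
    mem_univ, true_and]
  grind

theorem IsLatin.isRegularOfDegree (hL : IsLatin n L) :
    (latinGraph n L).IsRegularOfDegree (3 * (n - 1)) := by
  intro v
  have hdisj₁ : Disjoint (({w | w.1 = v.1} : Finset _).erase v)
      (({w | w.2 = v.2} : Finset _).erase v) := by
    refine disjoint_left.2 fun w hw hw' => ?_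
    simp only [mem_erase, mem_filter] at hw hw'
    exact hw.1 (Prod.ext hw.2.2 hw'.2.2)
  have hdisj₂ : Disjoint (({w | w.1 = v.1} : Finset _).erase v ∪
      ({w | w.2 = v.2} : Finset _).erase v) (({w | L w.1 w.2 = L v.1 v.2} : Finset _).erase v) := by
    refine disjoint_left.2 fun w hw hw' => ?_
    simp only [mem_union, mem_erase, mem_filter] at hw hw'
    rcases hw with hw | hw
    · exact hw.1 (hL.eq_of_fst_eq_of_symbol_eq hw.2.2 hw'.2.2)
    · exact hw.1 (hL.eq_of_snd_eq_of_symbol_eq hw.2.2 hw'.2.2)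
  rw [← SimpleGraph.card_neighborFinset_eq_degree, latinGraph_neighborFinset,
    card_union_of_disjoint hdisj₂, card_union_of_disjoint hdisj₁,
    card_erase_of_mem (by simp), card_erase_of_mem (by simp), card_erase_of_mem (by simp),
    card_filter_fst_eq, card_filter_snd_eq, hL.card_filter_symbol_eq]
  ring

theorem isTransversal_of_isIndepSet {s : Finset (Fin n × Fin n)}
    (hs : (latinGraph n L).IsIndepSet s) (hcard : n ≤ #s) : IsTransversal n L s := by
  have hinj : ∀ f : Fin n × Fin n → Fin n,
      (∀ a b, f a = f b → a.1 = b.1 ∨ a.2 = b.2 ∨ L a.1 a.2 = L b.1 b.2) → Set.InjOn f s :=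
    fun f hf a ha b hb hab =>
      by_contra fun hne => hs ha hb hne (latinGraph_adj.2 ⟨hne, hf a b hab⟩)
  have hcard' : Fintype.card (Fin n) ≤ #s := by rwa [Fintype.card_fin]
  exact ⟨existsUnique_of_injOn_of_card_le (hinj _ fun _ _ => Or.inl) hcard',
    existsUnique_of_injOn_of_card_le (hinj _ fun _ _ => Or.inr ∘ Or.inl) hcard',
    existsUnique_of_injOn_of_card_le (hinj (fun c => L c.1 c.2) fun _ _ => Or.inr ∘ Or.inr)
      hcard'⟩

theorem IsLatin.isKDominating_of_isTransversal (hL : IsLatin n L) {S : Set (Fin n × Fin n)}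
    (hT : IsTransversal n L S) : IsKDominating (latinGraph n L) 3 S := by
  intro v hv
  obtain ⟨r, ⟨hrS, hr⟩, -⟩ := hT.1 v.1
  obtain ⟨c, ⟨hcS, hc⟩, -⟩ := hT.2.1 v.2
  obtain ⟨t, ⟨htS, ht⟩, -⟩ := hT.2.2 (L v.1 v.2)
  have hne : ∀ w ∈ S, w ≠ v := fun w hw h => hv (h ▸ hw)
  have hrc : r ≠ c := fun h => hne r hrS (Prod.ext hr (h ▸ hc))
  have hrt : r ≠ t := fun h => hne r hrS (hL.eq_of_fst_eq_of_symbol_eq hr (h ▸ ht))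
  have hct : c ≠ t := fun h => hne c hcS (hL.eq_of_snd_eq_of_symbol_eq hc (h ▸ ht))
  have hsub : {r, c, t} ⊆ S ∩ (latinGraph n L).neighborSet v := by
    rintro w (rfl | rfl | rfl)
    · exact ⟨hrS, latinGraph_adj.2 ⟨(hne _ hrS).symm, .inl hr.symm⟩⟩
    · exact ⟨hcS, latinGraph_adj.2 ⟨(hne _ hcS).symm, .inr (.inl hc.symm)⟩⟩
    · exact ⟨htS, latinGraph_adj.2 ⟨(hne _ htS).symm, .inr (.inr ht.symm)⟩⟩
  calc 3 = ({r, c, t} : Set _).ncard := (Set.ncard_eq_three.2 ⟨r, c, t, hrc, hrt, hct, rfl⟩).symm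
    _ ≤ _ := Set.ncard_le_ncard hsub

theorem IsLatin.le_ncard_of_isKDominating (hL : IsLatin n L) {S : Set (Fin n × Fin n)}
    (hS : IsKDominating (latinGraph n L) 3 S) : n ≤ S.ncard := by
  obtain ⟨s, rfl⟩ := S.toFinite.exists_finset_coe
  have hdouble := hS.card_compl_mul_le hL.isRegularOfDegree
  have htotal : #sᶜ + #s = n * n := by simp [card_compl_add_card]
  rw [Set.ncard_coe_finset]
  rcases n with _ | m
  · exact Nat.zero_le _
  · simp only [Nat.add_sub_cancel] at hdouble
    nlinarith

theorem IsLatin.isTransversal_of_isKDominating (hL : IsLatin n L) {S : Set (Fin n × Fin n)}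
    (hS : IsKDominating (latinGraph n L) 3 S) (hcard : S.ncard ≤ n) : IsTransversal n L S := by
  have hn := hL.le_ncard_of_isKDominating hS
  obtain ⟨s, rfl⟩ := S.toFinite.exists_finset_coe
  rw [Set.ncard_coe_finset] at hn hcard
  have htotal : #sᶜ + #s = n * n := by simp [card_compl_add_card]
  refine isTransversal_of_isIndepSet (hS.isIndepSet_of_card_mul_le hL.isRegularOfDegree ?_) hn
  rcases n with _ | m
  · simp_all
  · simp only [Nat.add_sub_cancel]
    nlinarith

theorem IsLatin.le_of_isKDominating_partition (hL : IsLatin n L) (hn : 0 < n) {t : ℕ}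
    {P : Fin t → Set (Fin n × Fin n)} (hdisj : Pairwise fun a b => Disjoint (P a) (P b))
    (hcover : ⋃ i, P i = Set.univ) (hdom : ∀ i, IsKDominating (latinGraph n L) 3 (P i)) :
    t ≤ n := by
  have hsum := Set.sum_ncard_eq_of_iUnion_eq_univ hdisj hcover
  rw [Nat.card_eq_fintype_card, Fintype.card_prod, Fintype.card_fin] at hsum
  have : t * n ≤ n * n :=
    calc t * n = ∑ _i : Fin t, n := by simp
      _ ≤ ∑ i, (P i).ncard := sum_le_sum fun i _ => hL.le_ncard_of_isKDominating (hdom i)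
      _ = n * n := hsum
  exact Nat.le_of_mul_le_mul_right this hn

theorem IsLatin.isTransversal_of_isKDominating_partition (hL : IsLatin n L)
    {P : Fin n → Set (Fin n × Fin n)} (hdisj : Pairwise fun a b => Disjoint (P a) (P b))
    (hcover : ⋃ i, P i = Set.univ) (hdom : ∀ i, IsKDominating (latinGraph n L) 3 (P i))
    (i : Fin n) : IsTransversal n L (P i) := by
  have hsum := Set.sum_ncard_eq_of_iUnion_eq_univ hdisj hcover
  rw [Nat.card_eq_fintype_card, Fintype.card_prod, Fintype.card_fin] at hsum
  have hle : ∀ i ∈ univ, n ≤ (P i).ncard := fun i _ => hL.le_ncard_of_isKDominating (hdom i)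
  have heq : ∑ _i : Fin n, n = ∑ i, (P i).ncard := by simp [hsum]
  exact hL.isTransversal_of_isKDominating (hdom i)
    ((sum_eq_sum_iff_of_le hle).1 heq i (mem_univ i)).ge

/-- Every `t` admits a partition of the empty board, and `sSup` of an unbounded subset of `ℕ`
is `0`. -/
theorem domatic3_zero (L : Fin 0 → Fin 0 → Fin 0) : domatic3 0 L = 0 := by
  refine Set.Infinite.Nat.sSup_eq_zero
    (Set.infinite_of_forall_exists_gt fun t => ⟨t + 1, ?_, t.lt_succ_self⟩)
  exact ⟨fun _ => ∅, fun _ _ _ => disjoint_bot_left, Set.eq_univ_of_forall isEmptyElim,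
    fun _ x => isEmptyElim x⟩

end LatinSquare

theorem stmt7 (n : ℕ) (L : Fin n → Fin n → Fin n) (hL : IsLatin n L) :
    domatic3 n L ≤ n ∧
    (domatic3 n L = n ↔
      ∃ T : Fin n → Set (Fin n × Fin n),
        (Pairwise fun a b => Disjoint (T a) (T b)) ∧ (⋃ i, T i) = Set.univ ∧
        ∀ i, IsTransversal n L (T i)) := by
  obtain rfl | hn := n.eq_zero_or_pos
  · exact ⟨(domatic3_zero L).le, iff_of_true (domatic3_zero L)
      ⟨finZeroElim, finZeroElim, Set.eq_univ_of_forall isEmptyElim, finZeroElim⟩⟩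
  set D := {t | ∃ P : Fin t → Set (Fin n × Fin n),
    (Pairwise fun a b => Disjoint (P a) (P b)) ∧ (⋃ i, P i) = Set.univ ∧
    ∀ i, IsKDominating (latinGraph n L) 3 (P i)}
  have hD : domatic3 n L = sSup D := rfl
  have hub : n ∈ upperBounds D := fun t ⟨_, hdisj, hcover, hdom⟩ =>
    hL.le_of_isKDominating_partition hn hdisj hcover hdom
  have hle : sSup D ≤ n := csSup_le' hub
  rw [hD]
  refine ⟨hle, fun h => ?_, fun ⟨T, hdisj, hcover, hT⟩ => hle.antisymm ?_⟩
  · have hne : D.Nonempty := Set.nonempty_iff_ne_empty.2 fun hempty => by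
      rw [hempty, csSup_empty] at h
      exact hn.ne h
    obtain ⟨P, hdisj, hcover, hdom⟩ : n ∈ D := h ▸ Nat.sSup_mem hne ⟨n, hub⟩
    exact ⟨P, hdisj, hcover, hL.isTransversal_of_isKDominating_partition hdisj hcover hdom⟩
  · exact le_csSup ⟨n, hub⟩ ⟨T, hdisj, hcover, fun i => hL.isKDominating_of_isTransversal (hT i)⟩
end

section
/- For even n, the cyclic Latin square of order n (Cayley table of Z_n) has a quasi-transversal but has no transversal; consequently γ_3(L_3(L,n)) = n + 1. -/
/-!
A transversal of the Cayley table of a finite abelian group `G` is a permutation `g` of `G` such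
that `x ↦ x + g x` is again a permutation; summing over `G` gives `∑ x = 2 ∑ x`, so `∑ x = 0`.
In `ℤ/n` with `n` even, however, the sum of all elements is `n/2`.

The quasi-transversal consists of the cells `(i, i)` for `i < n/2` and `(i, i + 1)` for
`i ≥ n/2`, which meet every row, every symbol and every column except `n/2`, together with the
cell `(0, n/2)`. A set of cells meeting every row, column and symbol is `3`-dominating, so
`γ₃ ≤ n + 1`. Conversely, every vertex of the Latin square graph has degree `3(n - 1)`, so
counting the edges leaving a `3`-dominating set `S` gives
`3(n² - |S|) + 2e(S) ≤ 3(n - 1)|S|`. For `|S| ≤ n` this forces `|S| = n` and `e(S) = 0`,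
i.e. `S` is a transversal.
-/

open Finset

theorem Finset.existsUnique_of_injOn_of_card_eq {α β : Type*} [Fintype β] {s : Finset α}
    {f : α → β} (hf : Set.InjOn f s) (hcard : #s = Fintype.card β) (b : β) :
    ∃! a, a ∈ s ∧ f a = b := by
  classical
  obtain ⟨a, ha, rfl⟩ := surjOn_of_injOn_of_card_le (t := univ) f (fun _ _ => mem_univ _) hf
    (by rw [card_univ, hcard]) (mem_univ b)
  exact ⟨a, ⟨ha, rfl⟩, fun a' ⟨ha', h⟩ => hf ha' ha h⟩

theorem Finset.exists_card_fiber_eq_two {α β : Type*} [DecidableEq β] [Fintype β]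
    (s : Finset α) (f : α → β) (hcard : #s = Fintype.card β + 1) (hf : ∀ b, ∃ a ∈ s, f a = b) :
    ∃ b₀, #{a ∈ s | f a = b₀} = 2 ∧ ∀ b, b ≠ b₀ → #{a ∈ s | f a = b} = 1 := by
  have hpos : ∀ b, 0 < #{a ∈ s | f a = b} := fun b =>
    let ⟨a, ha, hab⟩ := hf b; card_pos.2 ⟨a, mem_filter.2 ⟨ha, hab⟩⟩
  -- the excesses `#fiber - 1` are natural numbers summing to `1`
  have hsum : ∑ b, (#{a ∈ s | f a = b} - 1) = 1 := by
    have h : ∑ b, (#{a ∈ s | f a = b} - 1 + 1) = #s := by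
      rw [card_eq_sum_card_fiberwise (f := f) (t := univ) fun a _ => mem_univ _]
      exact sum_congr rfl fun b _ => Nat.sub_add_cancel (hpos b)
    rw [sum_add_distrib, sum_const, card_univ, smul_eq_mul, mul_one] at h
    omega
  obtain ⟨b₀, -, hb₀⟩ := exists_ne_zero_of_sum_ne_zero (hsum.symm ▸ one_ne_zero)
  have hpair : ∀ b, b ≠ b₀ →
      (#{a ∈ s | f a = b₀} - 1) + (#{a ∈ s | f a = b} - 1) ≤ 1 := fun b hb => by
    have := sum_le_sum_of_subset (f := fun b => #{a ∈ s | f a = b} - 1) (subset_univ {b₀, b})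
    rwa [sum_pair hb.symm, hsum] at this
  have hle : #{a ∈ s | f a = b₀} - 1 ≤ 1 :=
    hsum ▸ single_le_sum (f := fun b => #{a ∈ s | f a = b} - 1) (fun b _ => Nat.zero_le _)
      (mem_univ b₀)
  refine ⟨b₀, by omega, fun b hb => ?_⟩
  have := hpair b hb
  have := hpos b
  omega

theorem IsKDominating.mul_card_compl_add_le {V : Type*} [Fintype V] [DecidableEq V]
    {G : SimpleGraph V} [DecidableRel G.Adj] {k d : ℕ} (hd : ∀ v, G.degree v ≤ d)
    {S : Finset V} (hS : IsKDominating G k S) :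
    k * #Sᶜ + ∑ s ∈ S, #{t ∈ S | G.Adj s t} ≤ d * #S := by
  have hout : k * #Sᶜ ≤ ∑ s ∈ S, #{t ∈ Sᶜ | G.Adj s t} := by
    have hk : ∀ v ∈ Sᶜ, k ≤ #{s ∈ S | G.Adj s v} := fun v hv => by
      have hv := hS v (by simpa using hv)
      rwa [show ↑S ∩ G.neighborSet v = ↑({s ∈ S | G.Adj s v}) by ext; simp [G.adj_comm],
        Set.ncard_coe_finset] at hv
    calc k * #Sᶜ ≤ ∑ v ∈ Sᶜ, #{s ∈ S | G.Adj s v} := by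
          simpa [mul_comm] using card_nsmul_le_sum Sᶜ _ k hk
      _ = ∑ s ∈ S, #{t ∈ Sᶜ | G.Adj s t} :=
          (sum_card_bipartiteAbove_eq_sum_card_bipartiteBelow _).symm
  calc k * #Sᶜ + ∑ s ∈ S, #{t ∈ S | G.Adj s t}
      ≤ ∑ s ∈ S, (#{t ∈ Sᶜ | G.Adj s t} + #{t ∈ S | G.Adj s t}) := by
        rw [sum_add_distrib]; omega
    _ = ∑ s ∈ S, G.degree s := by
        refine sum_congr rfl fun s _ => ?_
        rw [← card_union_of_disjoint (disjoint_filter_filter disjoint_compl_left),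
          ← filter_union, union_comm, union_compl, ← G.card_neighborFinset_eq_degree,
          G.neighborFinset_eq_filter]
    _ ≤ d * #S := by
        rw [mul_comm]
        exact sum_le_card_nsmul S _ d fun s _ => hd s

theorem sum_univ_eq_zero_of_injective_add {G : Type*} [AddCommGroup G] [Fintype G] {g : G → G}
    (hg : Function.Injective g) (hadd : Function.Injective fun x => x + g x) :
    ∑ x : G, x = 0 := by
  have h := hadd.bijective_of_finite.sum_comp id
  rw [← hg.bijective_of_finite.sum_comp id] at h
  simpa [sum_add_distrib] using h

theorem Fin.val_sum {ι : Type*} {n : ℕ} [NeZero n] (s : Finset ι) (f : ι → Fin n) :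
    (∑ i ∈ s, f i).val = (∑ i ∈ s, (f i).val) % n := by
  classical
  induction s using Finset.induction_on with
  | empty => simp
  | insert a s ha ih => rw [sum_insert ha, sum_insert ha, Fin.val_add, ih, Nat.add_mod_mod]

theorem Fin.sum_univ_ne_zero_of_even {n : ℕ} [NeZero n] (hn : Even n) : ∑ x : Fin n, x ≠ 0 := by
  intro h
  have hdvd : n ∣ ∑ i ∈ range n, i := by
    rw [Nat.dvd_iff_mod_eq_zero, ← Fin.sum_univ_eq_sum_range, ← Fin.val_sum, h, Fin.val_zero]
  -- `n * (2 q) = n * (n - 1)` would make the odd number `n - 1` even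
  obtain ⟨q, hq⟩ := hdvd
  have hgauss := sum_range_id_mul_two n
  rw [hq, mul_assoc] at hgauss
  have := Nat.eq_of_mul_eq_mul_left (NeZero.pos n) hgauss
  obtain ⟨k, rfl⟩ := hn
  omega

def MeetsEveryLine (n : ℕ) (L : Fin n → Fin n → Fin n) (S : Set (Fin n × Fin n)) : Prop :=
  (∀ i, ∃ c ∈ S, c.1 = i) ∧ (∀ j, ∃ c ∈ S, c.2 = j) ∧ (∀ s, ∃ c ∈ S, L c.1 c.2 = s)

section LatinSquare

variable {n : ℕ} {L : Fin n → Fin n → Fin n}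

theorem latinGraph_adj_s16 {v w : Fin n × Fin n} :
    (latinGraph n L).Adj v w ↔
      v ≠ w ∧ (v.1 = w.1 ∨ v.2 = w.2 ∨ L v.1 v.2 = L w.1 w.2) := by
  simp only [latinGraph, SimpleGraph.fromRel_adj, eq_comm (a := w.1), eq_comm (a := w.2),
    eq_comm (a := L w.1 w.2), or_self]

theorem IsLatin.isKDominating_of_meetsEveryLine (hL : IsLatin n L) {S : Set (Fin n × Fin n)}
    (hS : MeetsEveryLine n L S) : IsKDominating (latinGraph n L) 3 S := by
  intro v hv
  obtain ⟨a, haS, ha⟩ := hS.1 v.1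
  obtain ⟨b, hbS, hb⟩ := hS.2.1 v.2
  obtain ⟨c, hcS, hc⟩ := hS.2.2 (L v.1 v.2)
  have hne : ∀ x ∈ S, v ≠ x := fun x hx h => hv (h ▸ hx)
  have hab : a ≠ b := by
    rintro rfl
    exact hne a haS (Prod.ext ha.symm hb.symm)
  have hac : a ≠ c := by
    rintro rfl
    exact hne a haS (Prod.ext ha.symm ((hL.1 v.1).1 (ha ▸ hc)).symm)
  have hbc : b ≠ c := by
    rintro rfl
    exact hne b hbS (Prod.ext ((hL.2 v.2).1 (hb ▸ hc)).symm hb.symm)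
  have hsub : {a, b, c} ⊆ S ∩ (latinGraph n L).neighborSet v := by
    rintro x (rfl | rfl | rfl)
    · exact ⟨haS, latinGraph_adj_s16.2 ⟨hne _ haS, Or.inl ha.symm⟩⟩
    · exact ⟨hbS, latinGraph_adj_s16.2 ⟨hne _ hbS, Or.inr (Or.inl hb.symm)⟩⟩
    · exact ⟨hcS, latinGraph_adj_s16.2 ⟨hne _ hcS, Or.inr (Or.inr hc.symm)⟩⟩
  calc 3 = ({a, b, c} : Set (Fin n × Fin n)).ncard :=
        (Set.ncard_eq_three.2 ⟨a, b, c, hab, hac, hbc, rfl⟩).symm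
    _ ≤ _ := Set.ncard_le_ncard hsub (Set.toFinite _)

theorem IsLatin.degree_latinGraph_le (hL : IsLatin n L) [DecidableRel (latinGraph n L).Adj]
    (v : Fin n × Fin n) : (latinGraph n L).degree v ≤ 3 * (n - 1) := by
  have hline : ∀ (p : Fin n × Fin n → Prop) [DecidablePred p] (φ : Fin n × Fin n → Fin n),
      (∀ w, p w → φ w ≠ φ v) → (∀ w, p w → ∀ w', p w' → φ w = φ w' → w = w') →
      #{w | p w} ≤ n - 1 := by
    intro p _ φ hne hinj
    simpa using card_le_card_of_injOn φ (t := univ.erase (φ v))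
      (fun w hw => mem_erase.2 ⟨hne w (mem_filter.1 hw).2, mem_univ _⟩)
      (fun w hw w' hw' => hinj w (mem_filter.1 hw).2 w' (mem_filter.1 hw').2)
  have hrow := hline (fun w => w.1 = v.1 ∧ w ≠ v) Prod.snd
    (fun w ⟨h1, h2⟩ h => h2 (Prod.ext h1 h))
    (fun w ⟨h1, _⟩ w' ⟨h1', _⟩ h => Prod.ext (h1.trans h1'.symm) h)
  have hcol := hline (fun w => w.2 = v.2 ∧ w ≠ v) Prod.fst
    (fun w ⟨h1, h2⟩ h => h2 (Prod.ext h h1))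
    (fun w ⟨h1, _⟩ w' ⟨h1', _⟩ h => Prod.ext h (h1.trans h1'.symm))
  have hsym := hline (fun w => L w.1 w.2 = L v.1 v.2 ∧ w ≠ v) Prod.fst
    (fun w ⟨h1, h2⟩ h => h2 (Prod.ext h ((hL.1 v.1).1 (h ▸ h1))))
    (fun w ⟨h1, _⟩ w' ⟨h1', _⟩ h => Prod.ext h ((hL.1 w.1).1 (h ▸ h1.trans h1'.symm)))
  calc (latinGraph n L).degree v
      ≤ #(({w | w.1 = v.1 ∧ w ≠ v} : Finset _) ∪ ({w | w.2 = v.2 ∧ w ≠ v} : Finset _) ∪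
          ({w | L w.1 w.2 = L v.1 v.2 ∧ w ≠ v} : Finset _)) := by
        rw [← SimpleGraph.card_neighborFinset_eq_degree]
        refine card_le_card fun w hw => ?_
        obtain ⟨hne, h⟩ := latinGraph_adj_s16.1 ((SimpleGraph.mem_neighborFinset _ _ _).1 hw)
        simp only [mem_union, mem_filter, mem_univ, true_and]
        rcases h with h | h | h
        · exact Or.inl (Or.inl ⟨h.symm, hne.symm⟩)
        · exact Or.inl (Or.inr ⟨h.symm, hne.symm⟩)
        · exact Or.inr ⟨h.symm, hne.symm⟩
    _ ≤ 3 * (n - 1) := by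
        grw [card_union_le, card_union_le, hrow, hcol, hsym]
        omega

theorem IsPartialTransversal.isTransversal {S : Finset (Fin n × Fin n)}
    (hS : IsPartialTransversal n L S) (hcard : #S = n) : IsTransversal n L S := by
  have key : ∀ φ : Fin n × Fin n → Fin n, (∀ a ∈ S, ∀ b ∈ S, a ≠ b → φ a ≠ φ b) →
      ∀ x, ∃! c, c ∈ (S : Set _) ∧ φ c = x := fun φ hφ =>
    existsUnique_of_injOn_of_card_eq (fun a ha b hb => not_imp_not.1 (hφ a ha b hb))
      (by rw [hcard, Fintype.card_fin])
  exact ⟨key _ fun a ha b hb h => (hS a ha b hb h).1,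
    key _ fun a ha b hb h => (hS a ha b hb h).2.1,
    key (fun c => L c.1 c.2) fun a ha b hb h => (hS a ha b hb h).2.2⟩

theorem IsLatin.succ_le_ncard_of_isKDominating (hL : IsLatin n L)
    (hT : ¬ ∃ T, IsTransversal n L T) {S : Set (Fin n × Fin n)}
    (hS : IsKDominating (latinGraph n L) 3 S) : n + 1 ≤ S.ncard := by
  classical
  obtain ⟨S, rfl⟩ := S.toFinite.exists_finset_coe
  rw [Set.ncard_coe_finset]
  by_contra! hlt
  have hcount := hS.mul_card_compl_add_le hL.degree_latinGraph_le
  have hcompl : #Sᶜ + #S = n * n := by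
    rw [card_compl_add_card, Fintype.card_prod, Fintype.card_fin]
  set I := ∑ s ∈ S, #{t ∈ S | (latinGraph n L).Adj s t}
  obtain ⟨hcard, hedges⟩ : #S = n ∧ I = 0 := by
    rcases n with _ | n
    · simp_all
    · rw [Nat.add_sub_cancel] at hcount
      have hm : #S = n + 1 := le_antisymm (Nat.le_of_lt_succ hlt)
        (Nat.le_of_mul_le_mul_left (c := n + 1) (by nlinarith) (by omega))
      exact ⟨hm, by rw [hm] at hcount hcompl; nlinarith⟩
  refine hT ⟨S, IsPartialTransversal.isTransversal (fun a ha b hb hab => ?_) hcard⟩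
  have hna : ¬ (latinGraph n L).Adj a b := fun h => by
    simpa using (card_eq_zero.1 (sum_eq_zero_iff.1 hedges a ha)).subset (mem_filter.2 ⟨hb, h⟩)
  simp only [latinGraph_adj_s16, not_and, not_or] at hna
  exact hna hab

theorem isQuasiTransversal_of_meetsEveryLine {S : Finset (Fin n × Fin n)} (hcard : #S = n + 1)
    (hS : MeetsEveryLine n L S) : IsQuasiTransversal n L S := by
  have key : ∀ φ : Fin n × Fin n → Fin n, (∀ x, ∃ c ∈ S, φ c = x) →
      ∃ x₀, {c ∈ (S : Set _) | φ c = x₀}.ncard = 2 ∧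
        ∀ x, x ≠ x₀ → {c ∈ (S : Set _) | φ c = x}.ncard = 1 := fun φ hφ => by
    have hfiber (x : Fin n) : {c ∈ (S : Set _) | φ c = x}.ncard = #{c ∈ S | φ c = x} := by
      rw [← Set.ncard_coe_finset, coe_filter]; rfl
    simpa only [hfiber] using S.exists_card_fiber_eq_two φ (by rw [hcard, Fintype.card_fin]) hφ
  exact ⟨key _ hS.1, key _ hS.2.1, key (fun c => L c.1 c.2) hS.2.2⟩

theorem IsLatin.gamma3_eq (hL : IsLatin n L) (hT : ¬ ∃ T, IsTransversal n L T)
    {S : Set (Fin n × Fin n)} (hcard : S.ncard = n + 1) (hS : MeetsEveryLine n L S) :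
    gamma3 n L = n + 1 := by
  have hmem : n + 1 ∈ {m | ∃ S, IsKDominating (latinGraph n L) 3 S ∧ S.ncard = m} :=
    ⟨S, hL.isKDominating_of_meetsEveryLine hS, hcard⟩
  refine le_antisymm (Nat.sInf_le hmem) (le_csInf ⟨_, hmem⟩ ?_)
  rintro m ⟨S', hS', rfl⟩
  exact hL.succ_le_ncard_of_isKDominating hT hS'

theorem IsTransversal.exists_injective {T : Set (Fin n × Fin n)} (hT : IsTransversal n L T) :
    ∃ g : Fin n → Fin n, Function.Injective g ∧ Function.Injective fun i => L i (g i) := by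
  choose c hc _ using hT.1
  have hsym (i : Fin n) : L (c i).1 (c i).2 = L i (c i).2 := by rw [(hc i).2]
  refine ⟨fun i => (c i).2, fun a b h => ?_, fun a b h => ?_⟩
  · have := (hT.2.1 (c a).2).unique ⟨(hc a).1, rfl⟩ ⟨(hc b).1, h.symm⟩
    rw [← (hc a).2, ← (hc b).2, this]
  · have := (hT.2.2 _).unique ⟨(hc a).1, hsym a⟩ ⟨(hc b).1, (hsym b).trans h.symm⟩
    rw [← (hc a).2, ← (hc b).2, this]

end LatinSquare

section Cyclic

variable {n : ℕ} [NeZero n]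

theorem isLatin_add : IsLatin n fun i j => i + j :=
  ⟨fun i => (Equiv.addLeft i).bijective, fun j => (Equiv.addRight j).bijective⟩

theorem not_exists_isTransversal_add (hn : Even n) :
    ¬ ∃ T, IsTransversal n (fun i j => i + j) T := by
  rintro ⟨T, hT⟩
  obtain ⟨g, hg, hadd⟩ := hT.exists_injective
  exact Fin.sum_univ_ne_zero_of_even hn (sum_univ_eq_zero_of_injective_add hg hadd)

variable (n) in
def halfShift (i : Fin n) : Fin n := if (i : ℕ) < n / 2 then i else i + 1

variable (n) in
def cyclicQuasiTransversal : Finset (Fin n × Fin n) :=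
  insert (0, Fin.ofNat n (n / 2)) (univ.image fun i => (i, halfShift n i))

theorem card_cyclicQuasiTransversal (hn : Even n) : #(cyclicQuasiTransversal n) = n + 1 := by
  have hn2 : 2 ≤ n := by obtain ⟨k, rfl⟩ := hn; have := NeZero.ne (k + k); omega
  rw [cyclicQuasiTransversal, card_insert_of_notMem,
    card_image_of_injective _ fun a b h => congrArg Prod.fst h, card_univ, Fintype.card_fin]
  simp only [mem_image, mem_univ, true_and, Prod.mk.injEq, not_exists, not_and]
  rintro i rfl h
  have h0 : halfShift n 0 = 0 := if_pos (by rw [Fin.val_zero]; omega)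
  rw [h0, Fin.ext_iff, Fin.val_zero, Fin.val_ofNat, Nat.mod_eq_of_lt (by omega)] at h
  omega

theorem meetsEveryLine_cyclicQuasiTransversal (hn : Even n) :
    MeetsEveryLine n (fun i j => i + j) (cyclicQuasiTransversal n) := by
  obtain ⟨k, rfl⟩ := hn
  have hmem (i : Fin (k + k)) : (i, halfShift _ i) ∈ cyclicQuasiTransversal (k + k) :=
    mem_insert_of_mem (mem_image_of_mem _ (mem_univ i))
  have hlow (i : Fin (k + k)) (hi : i.val < k) : halfShift _ i = i := if_pos (by omega)
  have hhigh (i : Fin (k + k)) (hi : k ≤ i.val) : (halfShift _ i).val = (i.val + 1) % (k + k) := by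
    rw [halfShift, if_neg (by omega), Fin.val_add, Fin.val_one', Nat.add_mod_mod]
  refine ⟨fun i => ⟨_, hmem i, rfl⟩, fun j => ?_, fun s => ?_⟩
  · have hj := j.isLt
    rcases lt_trichotomy j.val k with h | h | h
    · exact ⟨_, hmem j, hlow j h⟩
    · refine ⟨_, mem_insert_self _ _, Fin.ext ?_⟩
      rw [Fin.val_ofNat, Nat.mod_eq_of_lt (by omega)]
      omega
    · refine ⟨_, hmem ⟨j.val - 1, by omega⟩, Fin.ext ?_⟩
      rw [hhigh _ (by dsimp only; omega)]
      dsimp only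
      rw [Nat.mod_eq_of_lt (by omega)]
      omega
  · have hs := s.isLt
    obtain ⟨a, ha | ha⟩ := Nat.even_or_odd' s.val
    · refine ⟨_, hmem ⟨a, by omega⟩, Fin.ext ?_⟩
      rw [Fin.val_add, hlow _ (by dsimp only; omega), Nat.mod_eq_of_lt (by dsimp only; omega)]
      dsimp only
      omega
    · -- the odd symbols wrap around: `(a + k) + (a + k + 1) = s + n`
      refine ⟨_, hmem ⟨a + k, by omega⟩, Fin.ext ?_⟩
      rw [Fin.val_add, hhigh _ (by dsimp only; omega), Nat.add_mod_mod]
      dsimp only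
      rw [show a + k + (a + k + 1) = s.val + (k + k) by omega, Nat.add_mod_right,
        Nat.mod_eq_of_lt hs]

end Cyclic

theorem stmt16 (n : ℕ) (hn : Even n) (hpos : 0 < n) :
    (∃ S : Set (Fin n × Fin n), IsQuasiTransversal n (fun i j => i + j) S) ∧
    (¬ ∃ T : Set (Fin n × Fin n), IsTransversal n (fun i j => i + j) T) ∧
    gamma3 n (fun i j => i + j) = n + 1 := by
  have : NeZero n := ⟨hpos.ne'⟩
  have hcard := card_cyclicQuasiTransversal hn
  have hmeets := meetsEveryLine_cyclicQuasiTransversal hn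
  have hT := not_exists_isTransversal_add hn
  exact ⟨⟨_, isQuasiTransversal_of_meetsEveryLine hcard hmeets⟩, hT,
    isLatin_add.gamma3_eq hT (by rwa [Set.ncard_coe_finset]) hmeets⟩
end
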